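/- arXiv:2104.13731 — 3 statements merged into one kernel-verified Lean document; each statement's English description precedes it below -/
import Mathlib

section
/- There do not exist a point ξ¹ ∈ [-1,1] and a real weight λ₁ such that for every f in the linear span of f1 and f2, the integral of f² over [-1,1] equals λ₁·f(ξ¹)². -/
open MeasureTheory Set

noncomputable def f1 : ℝ → ℝ := fun x => if x < 0 then 0 else 1

noncomputable def f2 (a A B : ℝ) : ℝ → ℝ := fun x =>
  if x < 0 then a
  else if x < 1/4 then A
  else if x < 1/2 then -A
  else if x < 3/4 then B
  else -B

/-!
Testing a one-point rule `∫ f² = λ f(ξ)²` on `f1` forces `f1 ξ ≠ 0`, i.e. `ξ ≥ 0`, and `λ = 1`.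
On `[0, 1]` the function `f2` takes only the values `±A` and `±B`, so testing on `f2` gives
`a² + A²/2 + B²/2 = A²` or `= B²`, i.e. `A² = 2a² + B²` or `B² = 2a² + A²`, both incompatible
with `A² > 2a² + B²`.
-/

section StepFunction

variable {g : ℝ → ℝ} {u v c : ℝ}

theorem intervalIntegrable_of_eqOn_Ioo (huv : u ≤ v) (h : EqOn g (fun _ => c) (Ioo u v)) :
    IntervalIntegrable g volume u v :=
  intervalIntegrable_const.congr_uIoo (by rwa [uIoo_of_le huv, eqOn_comm])

theorem integral_eq_of_eqOn_Ioo (huv : u ≤ v) (h : EqOn g (fun _ => c) (Ioo u v)) :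
    ∫ x in u..v, g x = (v - u) * c := by
  rw [intervalIntegral.integral_congr_Ioo_of_le huv h, intervalIntegral.integral_const,
    smul_eq_mul]

end StepFunction

theorem integral_f1_sq : ∫ x in (-1:ℝ)..1, f1 x ^ 2 = 1 := by
  have h₁ : EqOn (fun x => f1 x ^ 2) (fun _ => 0) (Ioo (-1) 0) := fun x hx => by
    simp [f1, hx.2]
  have h₂ : EqOn (fun x => f1 x ^ 2) (fun _ => 1) (Ioo 0 1) := fun x hx => by
    simp [f1, hx.1.le]
  rw [← intervalIntegral.integral_add_adjacent_intervals
      (intervalIntegrable_of_eqOn_Ioo (by norm_num) h₁)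
      (intervalIntegrable_of_eqOn_Ioo (by norm_num) h₂),
    integral_eq_of_eqOn_Ioo (by norm_num) h₁, integral_eq_of_eqOn_Ioo (by norm_num) h₂]
  norm_num

theorem f2_sq (a A B x : ℝ) :
    f2 a A B x ^ 2 = if x < 0 then a ^ 2 else if x < 1/2 then A ^ 2 else B ^ 2 := by
  unfold f2
  split_ifs <;> first | ring1 | linarith

theorem integral_f2_sq (a A B : ℝ) :
    ∫ x in (-1:ℝ)..1, f2 a A B x ^ 2 = a ^ 2 + A ^ 2 / 2 + B ^ 2 / 2 := by
  have h₁ : EqOn (fun x => f2 a A B x ^ 2) (fun _ => a ^ 2) (Ioo (-1) 0) := fun x hx => by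
    dsimp only
    rw [f2_sq, if_pos hx.2]
  have h₂ : EqOn (fun x => f2 a A B x ^ 2) (fun _ => A ^ 2) (Ioo 0 (1/2)) := fun x hx => by
    dsimp only
    rw [f2_sq, if_neg (not_lt.2 hx.1.le), if_pos hx.2]
  have h₃ : EqOn (fun x => f2 a A B x ^ 2) (fun _ => B ^ 2) (Ioo (1/2) 1) := fun x hx => by
    dsimp only
    rw [f2_sq, if_neg (by linarith [hx.1]), if_neg (not_lt.2 hx.1.le)]
  have i₁ := intervalIntegrable_of_eqOn_Ioo (by norm_num) h₁
  have i₂ := intervalIntegrable_of_eqOn_Ioo (by norm_num) h₂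
  have i₃ := intervalIntegrable_of_eqOn_Ioo (by norm_num) h₃
  rw [← intervalIntegral.integral_add_adjacent_intervals (i₁.trans i₂) i₃,
    ← intervalIntegral.integral_add_adjacent_intervals i₁ i₂,
    integral_eq_of_eqOn_Ioo (by norm_num) h₁, integral_eq_of_eqOn_Ioo (by norm_num) h₂,
    integral_eq_of_eqOn_Ioo (by norm_num) h₃]
  ring

theorem f2_sq_of_nonneg (a A B : ℝ) {x : ℝ} (hx : 0 ≤ x) :
    f2 a A B x ^ 2 = A ^ 2 ∨ f2 a A B x ^ 2 = B ^ 2 := by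
  rw [f2_sq, if_neg hx.not_gt]
  split_ifs <;> simp

theorem no_one_point_discretization_general (a A B : ℝ)
    (hcond : A ^ 2 > 2 * a ^ 2 + B ^ 2) :
    ¬ ∃ (ξ : ℝ) (l : ℝ), ξ ∈ Icc (-1:ℝ) 1 ∧
      ∀ f ∈ Submodule.span ℝ ({f1, f2 a A B} : Set (ℝ → ℝ)),
        (∫ x in (-1:ℝ)..1, (f x) ^ 2) = l * (f ξ) ^ 2 := by
  rintro ⟨ξ, l, -, hexact⟩
  have h₁ := hexact f1 (Submodule.subset_span (mem_insert _ _))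
  have h₂ := hexact (f2 a A B) (Submodule.subset_span (mem_insert_of_mem _ rfl))
  rw [integral_f1_sq] at h₁
  rw [integral_f2_sq] at h₂
  have hξ : 0 ≤ ξ := by
    by_contra! hξ
    simp [f1, hξ] at h₁
  have hl : l = 1 := by simpa [f1, hξ.not_gt] using h₁.symm
  rcases f2_sq_of_nonneg a A B hξ with h | h <;> rw [h, hl] at h₂ <;> nlinarith [sq_nonneg a]

theorem no_one_point_discretization (a A B : ℝ) (ha : 0 < a) (hAB : B < A) (hB : 0 < B)
    (hcond : A ^ 2 > 2 * a ^ 2 + B ^ 2) :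
    ¬ ∃ (ξ : ℝ) (l : ℝ), ξ ∈ Icc (-1:ℝ) 1 ∧
      ∀ f ∈ Submodule.span ℝ ({f1, f2 a A B} : Set (ℝ → ℝ)),
        (∫ x in (-1:ℝ)..1, (f x) ^ 2) = l * (f ξ) ^ 2 :=
  no_one_point_discretization_general a A B hcond
end

section
/- There do not exist points ξ¹, ξ² ∈ [-1,1] and real weights λ₁, λ₂ such that for every f in the linear span of f1 and f2, the integral of f² over [-1,1] equals λ₁·f(ξ¹)² + λ₂·f(ξ²)². -/
open MeasureTheory Set

/-!
Write `I = a² + (A² + B²)/2`. Since `f1` and `f2` are orthogonal with `‖f1‖² = 1` and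
`‖f2‖² = I`, an exact two-node rule integrates `(c f1 + d f2)²` to `c² + d² I` for all `c, d`.
Comparing coefficients, `f1` cannot vanish at both nodes; if it vanishes at exactly one, `f2` must
vanish at the other, which it never does on `[0, 1]`; and if `f1 = 1` at both nodes, the values
`q₁, q₂ ∈ {±A, ±B}` of `f2` there satisfy `q₁ q₂ = -I`. But `-q₁ q₂` is `A²`, `AB`, `B²` or
negative; `a > 0` and `B < A` put the last three below `I`, and `A² > 2a² + B²` puts `A²` above.
-/

section HasIntervalIntegral

variable {E : Type*} [NormedAddCommGroup E] [NormedSpace ℝ E]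

def HasIntervalIntegral (g : ℝ → E) (c d : ℝ) (I : E) : Prop :=
  IntervalIntegrable g volume c d ∧ ∫ x in c..d, g x = I

theorem hasIntervalIntegral_of_eqOn_Ioo [CompleteSpace E] {g : ℝ → E} {c d : ℝ} {k : E}
    (hcd : c ≤ d) (h : EqOn g (fun _ => k) (Ioo c d)) : HasIntervalIntegral g c d ((d - c) • k) :=
  ⟨intervalIntegrable_const.congr_uIoo (uIoo_of_le hcd ▸ h.symm), by
    rw [intervalIntegral.integral_congr_Ioo_of_le hcd h, intervalIntegral.integral_const]⟩

theorem HasIntervalIntegral.add_adjacent {g : ℝ → E} {b₁ b₂ b₃ : ℝ} {I J : E}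
    (h₁ : HasIntervalIntegral g b₁ b₂ I) (h₂ : HasIntervalIntegral g b₂ b₃ J) :
    HasIntervalIntegral g b₁ b₃ (I + J) :=
  ⟨h₁.1.trans h₂.1, by
    rw [← intervalIntegral.integral_add_adjacent_intervals h₁.1 h₂.1, h₁.2, h₂.2]⟩

end HasIntervalIntegral

/-- `(pᵢ, qᵢ)` are the values at the node `ξᵢ` of two orthogonal functions `p, q` with `‖p‖² = 1`
and `‖q‖² = I`, and the rule `l₁ δ_{ξ₁} + l₂ δ_{ξ₂}` integrates every `(c p + d q)²` exactly. -/
def IsExactTwoNodeRule (l₁ l₂ p₁ q₁ p₂ q₂ I : ℝ) : Prop :=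
  ∀ c d : ℝ, l₁ * (c * p₁ + d * q₁) ^ 2 + l₂ * (c * p₂ + d * q₂) ^ 2 = c ^ 2 + d ^ 2 * I

namespace IsExactTwoNodeRule

variable {l₁ l₂ p₁ p₂ q₁ q₂ I : ℝ}

theorem swap (h : IsExactTwoNodeRule l₁ l₂ p₁ q₁ p₂ q₂ I) :
    IsExactTwoNodeRule l₂ l₁ p₂ q₂ p₁ q₁ I :=
  fun c d => (add_comm _ _).trans (h c d)

theorem false_of_zero_zero (h : IsExactTwoNodeRule l₁ l₂ p₁ q₁ p₂ q₂ I) (hp₁ : p₁ = 0)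
    (hp₂ : p₂ = 0) : False := by
  simpa [hp₁, hp₂] using h 1 0

theorem eq_zero_of_zero_one (h : IsExactTwoNodeRule l₁ l₂ p₁ q₁ p₂ q₂ I) (hp₁ : p₁ = 0)
    (hp₂ : p₂ = 1) : q₂ = 0 := by
  subst hp₁ hp₂
  linear_combination (h 1 1 - h 0 1 - (1 + 2 * q₂) * h 1 0) / 2

theorem mul_eq_neg_of_one_one (h : IsExactTwoNodeRule l₁ l₂ p₁ q₁ p₂ q₂ I) (hp₁ : p₁ = 1)
    (hp₂ : p₂ = 1) : q₁ * q₂ = -I := by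
  subst hp₁ hp₂
  -- `(l₁ q₁ + l₂ q₂)(q₁ + q₂) = (l₁ q₁² + l₂ q₂²) + (l₁ + l₂) q₁ q₂`, and `l₁ q₁ + l₂ q₂ = 0`
  linear_combination (q₁ + q₂) / 2 * (h 1 1 - h 0 1 - h 1 0) - h 0 1 - q₁ * q₂ * h 1 0

end IsExactTwoNodeRule

section StepFunctions

variable {a A B x : ℝ}

theorem f1_of_neg (hx : x < 0) : f1 x = 0 := if_pos hx

theorem f1_of_nonneg (hx : 0 ≤ x) : f1 x = 1 := if_neg hx.not_gt

variable (a A B) in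
theorem f2_of_nonneg (hx : 0 ≤ x) :
    f2 a A B x = A ∨ f2 a A B x = -A ∨ f2 a A B x = B ∨ f2 a A B x = -B := by
  unfold f2
  split_ifs <;> first | linarith | simp

theorem f2_ne_zero_of_nonneg (hA : A ≠ 0) (hB : B ≠ 0) (hx : 0 ≤ x) : f2 a A B x ≠ 0 := by
  rcases f2_of_nonneg a A B hx with h | h | h | h <;> simp [h, hA, hB]

theorem f2_mul_f2_ne_of_nonneg (ha : 0 < a) (hAB : B < A) (hB : 0 < B)
    (hcond : A ^ 2 > 2 * a ^ 2 + B ^ 2) {y : ℝ} (hx : 0 ≤ x) (hy : 0 ≤ y) :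
    f2 a A B x * f2 a A B y ≠ -(a ^ 2 + (A ^ 2 + B ^ 2) / 2) := by
  have hA : 0 < A := hB.trans hAB
  rcases f2_of_nonneg a A B hx with h | h | h | h <;>
    rcases f2_of_nonneg a A B hy with h' | h' | h' | h' <;>
    rw [h, h'] <;>
    nlinarith [mul_pos ha ha, mul_pos hA hB, mul_pos hB hB, mul_pos (sub_pos.2 hAB) hA,
      mul_pos (sub_pos.2 hAB) hB]

theorem integral_comp_f1_f2 {E : Type*} [NormedAddCommGroup E] [NormedSpace ℝ E]
    [CompleteSpace E] (F : ℝ → ℝ → E) :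
    ∫ x in (-1:ℝ)..1, F (f1 x) (f2 a A B x)
      = F 0 a + (1 / 4 : ℝ) • (F 1 A + F 1 (-A) + F 1 B + F 1 (-B)) := by
  have piece : ∀ c d p q : ℝ, c ≤ d → (∀ x ∈ Ioo c d, f1 x = p ∧ f2 a A B x = q) →
      HasIntervalIntegral (fun x => F (f1 x) (f2 a A B x)) c d ((d - c) • F p q) :=
    fun _ _ _ _ hcd h => hasIntervalIntegral_of_eqOn_Ioo hcd fun x hx => by
      simp only [(h x hx).1, (h x hx).2]
  have h := (piece (-1) 0 0 a (by norm_num) ?_).add_adjacent <|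
    (piece 0 (1 / 4) 1 A (by norm_num) ?_).add_adjacent <|
    (piece (1 / 4) (1 / 2) 1 (-A) (by norm_num) ?_).add_adjacent <|
    (piece (1 / 2) (3 / 4) 1 B (by norm_num) ?_).add_adjacent <|
    (piece (3 / 4) 1 1 (-B) (by norm_num) ?_)
  · rw [h.2]
    module
  all_goals
    rintro x ⟨h₁, h₂⟩
    simp only [f1, f2]
    split_ifs <;> first | exact ⟨rfl, rfl⟩ | linarith

theorem integral_sq_smul_f1_add_smul_f2 (c d : ℝ) :
    ∫ x in (-1:ℝ)..1, ((c • f1 + d • f2 a A B) x) ^ 2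
      = c ^ 2 + d ^ 2 * (a ^ 2 + (A ^ 2 + B ^ 2) / 2) := by
  have h := integral_comp_f1_f2 (a := a) (A := A) (B := B) fun p q => (c * p + d * q) ^ 2
  simp only [Pi.add_apply, Pi.smul_apply, smul_eq_mul] at h ⊢
  rw [h]
  ring

end StepFunctions

theorem no_two_point_discretization (a A B : ℝ) (ha : 0 < a) (hAB : B < A) (hB : 0 < B)
    (hcond : A ^ 2 > 2 * a ^ 2 + B ^ 2) :
    ¬ ∃ (ξ₁ ξ₂ : ℝ) (l₁ l₂ : ℝ), ξ₁ ∈ Icc (-1:ℝ) 1 ∧ ξ₂ ∈ Icc (-1:ℝ) 1 ∧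
      ∀ f ∈ Submodule.span ℝ ({f1, f2 a A B} : Set (ℝ → ℝ)),
        (∫ x in (-1:ℝ)..1, (f x) ^ 2) = l₁ * (f ξ₁) ^ 2 + l₂ * (f ξ₂) ^ 2 := by
  rintro ⟨ξ₁, ξ₂, l₁, l₂, -, -, hquad⟩
  have hA : 0 < A := hB.trans hAB
  have hrule : IsExactTwoNodeRule l₁ l₂ (f1 ξ₁) (f2 a A B ξ₁) (f1 ξ₂) (f2 a A B ξ₂)
      (a ^ 2 + (A ^ 2 + B ^ 2) / 2) := fun c d =>
    (hquad _ (Submodule.mem_span_pair.2 ⟨c, d, rfl⟩)).symm.trans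
      (integral_sq_smul_f1_add_smul_f2 c d)
  rcases lt_or_ge ξ₁ 0 with h₁ | h₁ <;> rcases lt_or_ge ξ₂ 0 with h₂ | h₂
  · exact hrule.false_of_zero_zero (f1_of_neg h₁) (f1_of_neg h₂)
  · exact f2_ne_zero_of_nonneg hA.ne' hB.ne' h₂
      (hrule.eq_zero_of_zero_one (f1_of_neg h₁) (f1_of_nonneg h₂))
  · exact f2_ne_zero_of_nonneg hA.ne' hB.ne' h₁
      (hrule.swap.eq_zero_of_zero_one (f1_of_neg h₂) (f1_of_nonneg h₁))
  · exact f2_mul_f2_ne_of_nonneg ha hAB hB hcond h₁ h₂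
      (hrule.mul_eq_neg_of_one_one (f1_of_nonneg h₁) (f1_of_nonneg h₂))
end

section
/- With nodes ξ¹ = -1/2, ξ² = 1/8, ξ³ = 3/8 and weights λ₁ = (2a² - A² + B²)/(2a²), λ₂ = λ₃ = 1/2, for every f in the linear span of f1 and f2, the integral of f² over [-1,1] equals λ₁·f(ξ¹)² + λ₂·f(ξ²)² + λ₃·f(ξ³)². Moreover λ₁ < 0. -/
open MeasureTheory Set

/-!
Every `f = c • f1 + d • f2` is a step function, so `∫ f² = (d a)² + ((c + d A)² + (c - d A)² +
(c + d B)² + (c - d B)²) / 4 = c² + d² (a² + (A² + B²) / 2)`, while the three nodes sample the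
values `d a`, `c + d A`, `c - d A` and give `c² + d² (λ₁ a² + A²)`. The weight `λ₁` is the one
matching the `d²` terms, and `λ₁ < 0` is exactly `A² > 2 a² + B²`.
-/

section ConstantPiece

variable {g : ℝ → ℝ} {p q v : ℝ}

theorem intervalIntegrable_of_eqOn_uIoo (h : EqOn g (fun _ => v) (uIoo p q)) :
    IntervalIntegrable g volume p q :=
  (intervalIntegrable_congr_uIoo h).mpr intervalIntegrable_const

theorem integral_eq_of_eqOn_uIoo (h : EqOn g (fun _ => v) (uIoo p q)) :
    ∫ x in p..q, g x = (q - p) * v := by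
  rw [intervalIntegral.integral_congr_uIoo h, intervalIntegral.integral_const, smul_eq_mul]

end ConstantPiece

theorem integral_sq_linear_combination_f1_f2 (a A B c d : ℝ) :
    ∫ x in (-1:ℝ)..1, ((c • f1 + d • f2 a A B) x) ^ 2 =
      (d * a) ^ 2 + ((c + d * A) ^ 2 + (c - d * A) ^ 2 + (c + d * B) ^ 2 + (c - d * B) ^ 2) / 4 := by
  set g : ℝ → ℝ := fun x => ((c • f1 + d • f2 a A B) x) ^ 2
  have piece : ∀ {p q v : ℝ}, p ≤ q → (∀ x, p < x → x < q → g x = v) →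
      EqOn g (fun _ => v) (uIoo p q) := fun hpq h x hx => by
    rw [uIoo_of_le hpq] at hx
    exact h x hx.1 hx.2
  obtain ⟨h1, h2, h3, h4, h5⟩ :
      EqOn g (fun _ => (d * a) ^ 2) (uIoo (-1) 0) ∧
      EqOn g (fun _ => (c + d * A) ^ 2) (uIoo 0 (1/4)) ∧
      EqOn g (fun _ => (c - d * A) ^ 2) (uIoo (1/4) (1/2)) ∧
      EqOn g (fun _ => (c + d * B) ^ 2) (uIoo (1/2) (3/4)) ∧
      EqOn g (fun _ => (c - d * B) ^ 2) (uIoo (3/4) 1) := by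
    refine ⟨piece (by norm_num) ?_, piece (by norm_num) ?_, piece (by norm_num) ?_,
      piece (by norm_num) ?_, piece (by norm_num) ?_⟩ <;>
    · intro x hp hq
      simp only [g, Pi.add_apply, Pi.smul_apply, smul_eq_mul, f1, f2]
      split_ifs <;> first | ring1 | linarith
  have i45 := (intervalIntegrable_of_eqOn_uIoo h4).trans (intervalIntegrable_of_eqOn_uIoo h5)
  have i35 := (intervalIntegrable_of_eqOn_uIoo h3).trans i45
  have i25 := (intervalIntegrable_of_eqOn_uIoo h2).trans i35
  rw [← intervalIntegral.integral_add_adjacent_intervals (intervalIntegrable_of_eqOn_uIoo h1) i25,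
    ← intervalIntegral.integral_add_adjacent_intervals (intervalIntegrable_of_eqOn_uIoo h2) i35,
    ← intervalIntegral.integral_add_adjacent_intervals (intervalIntegrable_of_eqOn_uIoo h3) i45,
    ← intervalIntegral.integral_add_adjacent_intervals (intervalIntegrable_of_eqOn_uIoo h4)
      (intervalIntegrable_of_eqOn_uIoo h5),
    integral_eq_of_eqOn_uIoo h1, integral_eq_of_eqOn_uIoo h2, integral_eq_of_eqOn_uIoo h3,
    integral_eq_of_eqOn_uIoo h4, integral_eq_of_eqOn_uIoo h5]
  ring

theorem three_point_discretization_negative_weight_general (a A B : ℝ) (ha : 0 < a)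
    (hcond : A ^ 2 > 2 * a ^ 2 + B ^ 2) :
    (∀ f ∈ Submodule.span ℝ ({f1, f2 a A B} : Set (ℝ → ℝ)),
      (∫ x in (-1:ℝ)..1, (f x) ^ 2) =
        (2 * a ^ 2 - A ^ 2 + B ^ 2) / (2 * a ^ 2) * (f (-1/2)) ^ 2
          + 1/2 * (f (1/8)) ^ 2 + 1/2 * (f (3/8)) ^ 2) ∧
    (2 * a ^ 2 - A ^ 2 + B ^ 2) / (2 * a ^ 2) < 0 := by
  refine ⟨fun f hf => ?_, div_neg_of_neg_of_pos (by linarith) (by positivity)⟩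
  obtain ⟨c, d, rfl⟩ := Submodule.mem_span_pair.mp hf
  have node1 : (c • f1 + d • f2 a A B) (-1/2) = d * a := by norm_num [f1, f2]
  have node2 : (c • f1 + d • f2 a A B) (1/8) = c + d * A := by norm_num [f1, f2]
  have node3 : (c • f1 + d • f2 a A B) (3/8) = c - d * A := by norm_num [f1, f2]; ring
  rw [integral_sq_linear_combination_f1_f2, node1, node2, node3]
  field_simp
  ring

theorem three_point_discretization_negative_weight (a A B : ℝ) (ha : 0 < a) (hAB : B < A)
    (hB : 0 < B) (hcond : A ^ 2 > 2 * a ^ 2 + B ^ 2) :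
    (∀ f ∈ Submodule.span ℝ ({f1, f2 a A B} : Set (ℝ → ℝ)),
      (∫ x in (-1:ℝ)..1, (f x) ^ 2) =
        (2 * a ^ 2 - A ^ 2 + B ^ 2) / (2 * a ^ 2) * (f (-1/2)) ^ 2
          + 1/2 * (f (1/8)) ^ 2 + 1/2 * (f (3/8)) ^ 2) ∧
    (2 * a ^ 2 - A ^ 2 + B ^ 2) / (2 * a ^ 2) < 0 :=
  three_point_discretization_negative_weight_general a A B ha hcond
end
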